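/- Every nonzero element a of a finite additive poset A can be written as a sum of pairwise independent atoms of A; moreover, every atom appearing in any such expansion of a lies in the tail of a (i.e., is ≤ a). -/

import Mathlib

/-- An additive poset: an abelian group with a partial order satisfying
(∗): `b ≤ a → c ≤ a → b + c ≤ a` and (∗∗): `a ≤ b → a ≤ c → a ≤ a + b + c`. -/
class AdditivePoset (A : Type*) extends AddCommGroup A, PartialOrder A where
  add_le_of_le : ∀ a b c : A, b ≤ a → c ≤ a → b + c ≤ a
  le_add_add : ∀ a b c : A, a ≤ b → a ≤ c → a ≤ a + b + c

/-- An atom of an additive poset: a nonzero element whose tail is `{0, a}`. -/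
def AdditivePoset.IsAtom' {A : Type*} [AdditivePoset A] (a : A) : Prop :=
  a ≠ 0 ∧ ∀ b : A, b ≤ a → b = 0 ∨ b = a

/-!
In an additive poset every element has order two, since (∗) and (∗∗) give `x + x + x = x`.
Independence `x ≤ x + y` is then symmetric, closed under sums in the second argument and
inherited by elements below: from `x ≤ x + y` and `z ≤ y`, (∗∗) yields
`z ≤ z + y + (x + y) = z + x`. Hence each summand of a pairwise independent family lies below
the sum. For existence, peel off an atom `b ≤ a`: then `a + b < a`, and `b` is independent of
`a + b`, hence of every atom in an expansion of `a + b`, which lies below `a + b`.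
-/

open Function

lemma Fin.pairwise_cons {α : Type*} {r : α → α → Prop} [Std.Symm r] {n : ℕ} {x : α}
    {f : Fin n → α} (hx : ∀ i, r x (f i)) (hf : Pairwise (r on f)) :
    Pairwise (r on (Fin.cons x f : Fin (n + 1) → α)) := by
  intro i j hij
  cases i using Fin.cases <;> cases j using Fin.cases
  · exact absurd rfl hij
  · exact hx _
  · exact symm_of r (hx _)
  · exact hf (fun h => hij (congrArg Fin.succ h))

namespace AdditivePoset

variable {A : Type*} [AdditivePoset A]

def Indep (x y : A) : Prop := x ≤ x + y

lemma add_self_eq_zero (x : A) : x + x = 0 := by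
  have h₁ : x + x ≤ x := add_le_of_le x x x le_rfl le_rfl
  have h₂ : x + x + x = x :=
    le_antisymm (add_le_of_le x (x + x) x h₁ le_rfl) (le_add_add x x x le_rfl le_rfl)
  simpa using h₂

lemma add_add_cancel_left (x y : A) : x + (x + y) = y := by
  rw [← add_assoc, add_self_eq_zero, zero_add]

lemma indep_zero_right (x : A) : Indep x 0 := by
  rw [Indep, add_zero]

lemma Indep.le_add {x y : A} (h : Indep x y) : y ≤ x + y := by
  have h' : x + (x + y) ≤ x + y := add_le_of_le (x + y) x (x + y) h le_rfl
  rwa [add_add_cancel_left] at h'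

lemma Indep.symm {x y : A} (h : Indep x y) : Indep y x := by
  rw [Indep, add_comm]
  exact h.le_add

instance : Std.Symm (Indep : A → A → Prop) := ⟨fun _ _ => Indep.symm⟩

lemma Indep.add {x u v : A} (hu : Indep x u) (hv : Indep x v) : Indep x (u + v) := by
  have h := le_add_add x (x + u) (x + v) hu hv
  rwa [show x + (x + u) + (x + v) = (x + x) + (x + (u + v)) by abel, add_self_eq_zero,
    zero_add] at h

lemma Indep.mono_right {x y z : A} (h : Indep x y) (hz : z ≤ y) : Indep x z := by
  have h' := le_add_add z y (x + y) hz (hz.trans h.le_add)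
  rw [show z + y + (x + y) = (z + x) + (y + y) by abel, add_self_eq_zero, add_zero] at h'
  exact Indep.symm h'

lemma Indep.sum {ι : Type*} {s : Finset ι} {x : A} {f : ι → A} (h : ∀ i ∈ s, Indep x (f i)) :
    Indep x (∑ i ∈ s, f i) :=
  Finset.sum_induction f (Indep x) (fun _ _ => Indep.add) (indep_zero_right x) h

lemma le_sum_of_pairwise_indep {ι : Type*} [Fintype ι] {b : ι → A}
    (hb : Pairwise (Indep on b)) (i : ι) : b i ≤ ∑ j, b j := by
  classical
  rw [← Finset.add_sum_erase _ _ (Finset.mem_univ i)]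
  exact Indep.sum fun j hj => hb (Finset.ne_of_mem_erase hj).symm

lemma exists_isAtom'_le [WellFoundedLT A] {a : A} (ha : a ≠ 0) : ∃ b, IsAtom' b ∧ b ≤ a := by
  induction a using WellFoundedLT.induction with
  | _ a ih =>
    by_cases hatom : IsAtom' a
    · exact ⟨a, hatom, le_rfl⟩
    obtain ⟨x, hxa, hx0, hxne⟩ : ∃ x ≤ a, x ≠ 0 ∧ x ≠ a := by
      simpa [IsAtom', ha] using hatom
    obtain ⟨b, hb, hbx⟩ := ih x (lt_of_le_of_ne hxa hxne) hx0
    exact ⟨b, hb, hbx.trans hxa⟩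

theorem exists_sum_isAtom' [WellFoundedLT A] (a : A) :
    ∃ (n : ℕ) (b : Fin n → A), (∀ i, IsAtom' (b i)) ∧ Pairwise (Indep on b) ∧ ∑ i, b i = a := by
  induction a using WellFoundedLT.induction with
  | _ a ih =>
    rcases eq_or_ne a 0 with rfl | ha
    · exact ⟨0, Fin.elim0, fun i => i.elim0, fun i => i.elim0, by simp⟩
    obtain ⟨b, hb, hba⟩ := exists_isAtom'_le ha
    have hrest : a + b < a :=
      lt_of_le_of_ne (add_le_of_le a a b le_rfl hba) fun h => hb.1 (by simpa using h)
    obtain ⟨n, e, he, hpair, hsum⟩ := ih _ hrest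
    have hb_add : b + (a + b) = a := by rw [add_comm a b, add_add_cancel_left]
    have hb_indep : Indep b (a + b) := by rwa [Indep, hb_add]
    have hbe : ∀ i, Indep b (e i) := fun i =>
      hb_indep.mono_right (hsum ▸ le_sum_of_pairwise_indep hpair i)
    refine ⟨n + 1, Fin.cons b e, Fin.forall_fin_succ.2 ⟨hb, he⟩,
      Fin.pairwise_cons hbe hpair, ?_⟩
    rw [Fin.sum_cons, hsum, hb_add]

end AdditivePoset

theorem stmt18_general {A : Type*} [AdditivePoset A] [Fintype A] (a : A) :
    (∃ (n : ℕ) (b : Fin n → A), (∀ i, AdditivePoset.IsAtom' (b i)) ∧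
      (∀ i j, i ≠ j → b i ≤ b i + b j) ∧ ∑ i, b i = a) ∧
    (∀ (n : ℕ) (b : Fin n → A), (∀ i, AdditivePoset.IsAtom' (b i)) →
      (∀ i j, i ≠ j → b i ≤ b i + b j) → ∑ i, b i = a → ∀ i, b i ≤ a) := by
  refine ⟨AdditivePoset.exists_sum_isAtom' a, fun n b _ hindep hsum i => ?_⟩
  exact hsum ▸ AdditivePoset.le_sum_of_pairwise_indep hindep i

theorem stmt18 {A : Type*} [AdditivePoset A] [Fintype A] (a : A) (ha : a ≠ 0) :
    (∃ (n : ℕ) (b : Fin n → A), (∀ i, AdditivePoset.IsAtom' (b i)) ∧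
      (∀ i j, i ≠ j → b i ≤ b i + b j) ∧ ∑ i, b i = a) ∧
    (∀ (n : ℕ) (b : Fin n → A), (∀ i, AdditivePoset.IsAtom' (b i)) →
      (∀ i j, i ≠ j → b i ≤ b i + b j) → ∑ i, b i = a → ∀ i, b i ≤ a) :=
  stmt18_general a
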